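/- arXiv:2410.08095 — 2 statements merged into one kernel-verified Lean document; each statement's English description precedes it below -/
import Mathlib

section
/- Let ψ, φ ∈ ℝ^d be descending probability vectors with all entries strictly positive such that ψ is not majorized by φ (so q_1 < 1), let φ^∧ = ψ∧φ, let q_j, l_j (j = 1,…,k) be given by the recursive construction for (ψ, φ), and set φ^f_i = q_j φ_i, φ^t_i = q_j (φ^∧)_i and n_i = (1 − q_1/q_j)/(1 − q_1) for i ∈ {l_j,…,l_{j−1}−1}, j ∈ {1,…,k}. Define the residual vectors μ_i = n_i φ^f_i and ν_i = n_i φ^t_i. Then μ and ν are descending probability vectors and ν ≺ μ: upon failure of the probabilistic transformation, the residual state of the thrifty protocol is more coherent than that of the greedy protocol. -/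
open Finset

/-- Tail-sum coherence monotone `C_l(p) = ∑_{i=l}^d p_i`, for a vector with (1-based)
entries `p 1, …, p d`.  Note `Cm d p (d+1) = 0` automatically. -/
noncomputable def Cm (d : ℕ) (p : ℕ → ℝ) (l : ℕ) : ℝ := ∑ i ∈ Finset.Icc l d, p i

/-- `p` is a descending probability vector on the (1-based) index range `{1, …, d}`. -/
structure DescProb (d : ℕ) (p : ℕ → ℝ) : Prop where
  nonneg : ∀ i, 1 ≤ i → i ≤ d → 0 ≤ p i
  anti : ∀ i j, 1 ≤ i → i ≤ j → j ≤ d → p j ≤ p i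
  sum_one : ∑ i ∈ Finset.Icc 1 d, p i = 1

/-- `p ≺ q` : `p` is majorized by `q` (both regarded as descending vectors on `{1, …, d}`). -/
def MajorizedBy (d : ℕ) (p q : ℕ → ℝ) : Prop :=
  (∀ k, 1 ≤ k → k ≤ d → ∑ i ∈ Finset.Icc 1 k, p i ≤ ∑ i ∈ Finset.Icc 1 k, q i) ∧
    ∑ i ∈ Finset.Icc 1 d, p i = ∑ i ∈ Finset.Icc 1 d, q i

/-- The ratio `(C_l(ψ) - C_prev(ψ)) / (C_l(φ) - C_prev(φ))` appearing in the recursive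
construction of the intermediate vector. -/
noncomputable def ratio (d : ℕ) (ψ φ : ℕ → ℝ) (prev l : ℕ) : ℝ :=
  (Cm d ψ l - Cm d ψ prev) / (Cm d φ l - Cm d φ prev)

/-- One step of the recursion: the minimal ratio over `l ∈ {1, …, prev - 1}`. -/
noncomputable def stepQ (d : ℕ) (ψ φ : ℕ → ℝ) (prev : ℕ) : ℝ :=
  sInf {x : ℝ | ∃ l, 1 ≤ l ∧ l ≤ prev - 1 ∧ x = ratio d ψ φ prev l}

/-- One step of the recursion: the smallest `l ∈ {1, …, prev - 1}` attaining the minimal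
ratio. -/
noncomputable def stepL (d : ℕ) (ψ φ : ℕ → ℝ) (prev : ℕ) : ℕ :=
  sInf {l : ℕ | 1 ≤ l ∧ l ≤ prev - 1 ∧ ratio d ψ φ prev l = stepQ d ψ φ prev}

/-- The sequence of indices `l_0 = d + 1 > l_1 > l_2 > ⋯` of the recursive construction. -/
noncomputable def Lseq (d : ℕ) (ψ φ : ℕ → ℝ) : ℕ → ℕ
  | 0 => d + 1
  | j + 1 => stepL d ψ φ (Lseq d ψ φ j)

/-- The sequence of ratios `q_1 < q_2 < ⋯` of the recursive construction (`Qseq d ψ φ j`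
is `q_j` for `j ≥ 1`; the value at `0` is irrelevant). -/
noncomputable def Qseq (d : ℕ) (ψ φ : ℕ → ℝ) : ℕ → ℝ
  | 0 => 1
  | j + 1 => stepQ d ψ φ (Lseq d ψ φ j)

/-- The terminating step `k` of the recursion: the first index `j` with `l_j = 1`. -/
noncomputable def kstop (d : ℕ) (ψ φ : ℕ → ℝ) : ℕ := sInf {j : ℕ | Lseq d ψ φ j = 1}

/-- The intermediate vector `φ^f`, with `φ^f_i = q_j φ_i` for `i ∈ {l_j, …, l_{j-1} - 1}`
(for `i ∈ {1, …, d}`, the smallest `j` with `l_j ≤ i` is precisely the `j` with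
`l_j ≤ i ≤ l_{j-1} - 1`). -/
noncomputable def phif (d : ℕ) (ψ φ : ℕ → ℝ) (i : ℕ) : ℝ :=
  Qseq d ψ φ (sInf {j : ℕ | Lseq d ψ φ j ≤ i}) * φ i

/-- The meet `p ∧ q` of two descending probability vectors in the majorization lattice,
defined componentwise via prefix sums (empty sums are `0`). -/
noncomputable def meet2 (p q : ℕ → ℝ) (i : ℕ) : ℝ :=
  min (∑ j ∈ Finset.Icc 1 i, p j) (∑ j ∈ Finset.Icc 1 i, q j) -
    min (∑ j ∈ Finset.Icc 1 (i - 1), p j) (∑ j ∈ Finset.Icc 1 (i - 1), q j)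

/-- The intermediate vector `φ^t` of the thrifty protocol, with `φ^t_i = q_j (ψ ∧ φ)_i`
for `i ∈ {l_j, …, l_{j-1} - 1}`. -/
noncomputable def phit (d : ℕ) (ψ φ : ℕ → ℝ) (i : ℕ) : ℝ :=
  Qseq d ψ φ (sInf {j : ℕ | Lseq d ψ φ j ≤ i}) * meet2 ψ φ i

/-- The failure-branch weights `n_i = (1 - q_1 / q_j) / (1 - q_1)` for
`i ∈ {l_j, …, l_{j-1} - 1}`. -/
noncomputable def nvec (d : ℕ) (ψ φ : ℕ → ℝ) (i : ℕ) : ℝ :=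
  (1 - Qseq d ψ φ 1 / Qseq d ψ φ (sInf {j : ℕ | Lseq d ψ φ j ≤ i})) / (1 - Qseq d ψ φ 1)

/-!
On the block `l_j ≤ i < l_{j-1}` both residuals carry the same factor
`c_i = n_i q_j = (q_j - q_1) / (1 - q_1)`, so `μ = c φ` and `ν = c (ψ ∧ φ)`, where `c` is
nonnegative and nonincreasing because the `q_j` increase. The minimality of the ratios forces
`C_{l_j}(ψ) ≤ C_{l_j}(φ)`, so the tails `C_l(ψ ∧ φ) = max (C_l ψ) (C_l φ)` agree with those of `φ`
at every block boundary. Summation by parts then gives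
`C_l(ν) - C_l(μ) = c_l (C_l(ψ ∧ φ) - C_l(φ)) ≥ 0`, which is `ν ≺ μ`.
-/

section TailSums

variable {d : ℕ}

theorem Cm_of_lt (p : ℕ → ℝ) {l : ℕ} (hl : d < l) : Cm d p l = 0 := by
  rw [Cm, Icc_eq_empty (by omega), sum_empty]

theorem Cm_eq_add (p : ℕ → ℝ) {l : ℕ} (hl : l ≤ d) : Cm d p l = p l + Cm d p (l + 1) := by
  rw [Cm, Cm, Icc_add_one_left_eq_Ioc, add_sum_Ioc_eq_sum_Icc hl]

theorem sum_Icc_one_add_Cm (p : ℕ → ℝ) {k : ℕ} (hk : k ≤ d) :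
    ∑ i ∈ Icc 1 k, p i + Cm d p (k + 1) = ∑ i ∈ Icc 1 d, p i := by
  simp only [Cm, ← Ico_add_one_right_eq_Icc]
  exact sum_Ico_consecutive p (by omega) (by omega)

theorem Cm_sub_Cm (p : ℕ → ℝ) {l m : ℕ} (hlm : l ≤ m) (hm : m ≤ d + 1) :
    Cm d p l - Cm d p m = ∑ i ∈ Ico l m, p i := by
  simp only [Cm, ← Ico_add_one_right_eq_Icc]
  rw [← sum_Ico_consecutive p hlm hm, add_sub_cancel_right]

theorem Cm_sub (p q : ℕ → ℝ) (l : ℕ) : Cm d (fun i => p i - q i) l = Cm d p l - Cm d q l :=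
  sum_sub_distrib _ _

theorem Cm_sub_Cm_pos {p : ℕ → ℝ} (hp : ∀ i, 1 ≤ i → i ≤ d → 0 < p i) {l m : ℕ} (hl : 1 ≤ l)
    (hlm : l < m) (hm : m ≤ d + 1) : 0 < Cm d p l - Cm d p m := by
  rw [Cm_sub_Cm p hlm.le hm]
  refine sum_pos (fun i hi => ?_) ⟨l, mem_Ico.mpr ⟨le_rfl, hlm⟩⟩
  rw [mem_Ico] at hi
  exact hp i (by omega) (by omega)

theorem Cm_mul_of_eqOn_Ico {f : ℕ → ℝ} {a : ℝ} (p : ℕ → ℝ) {l m : ℕ}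
    (hf : ∀ i ∈ Ico l m, f i = a) (hlm : l ≤ m) (hm : m ≤ d + 1) :
    Cm d (fun i => f i * p i) l = a * (Cm d p l - Cm d p m) + Cm d (fun i => f i * p i) m := by
  rw [← sub_eq_iff_eq_add, Cm_sub_Cm _ hlm hm, Cm_sub_Cm _ hlm hm, mul_sum]
  exact sum_congr rfl fun i hi => by rw [hf i hi]

theorem Cm_mul_eq_mul_Cm {f w : ℕ → ℝ} {l : ℕ}
    (h : ∀ i, l ≤ i → f i = f (i + 1) ∨ Cm d w (i + 1) = 0) :
    Cm d (fun i => f i * w i) l = f l * Cm d w l := by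
  induction hn : d + 1 - l generalizing l with
  | zero => rw [Cm_of_lt _ (by omega), Cm_of_lt _ (by omega), mul_zero]
  | succ n ih =>
    have hl : l ≤ d := by omega
    rw [Cm_eq_add _ hl, Cm_eq_add _ hl, ih (fun i hi => h i (by omega)) (by omega)]
    rcases h l le_rfl with hf | hw
    · rw [hf]; ring
    · rw [hw]; ring

theorem majorizedBy_of_Cm_le {p q : ℕ → ℝ}
    (hsum : ∑ i ∈ Icc 1 d, p i = ∑ i ∈ Icc 1 d, q i)
    (h : ∀ l, 2 ≤ l → l ≤ d → Cm d q l ≤ Cm d p l) : MajorizedBy d p q := by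
  refine ⟨fun k hk hkd => ?_, hsum⟩
  rcases hkd.eq_or_lt with rfl | hkd
  · exact hsum.le
  have hp := sum_Icc_one_add_Cm p hkd.le
  have hq := sum_Icc_one_add_Cm q hkd.le
  linarith [h (k + 1) (by omega) hkd]

theorem DescProb.mul {c p : ℕ → ℝ} (hp : DescProb d p)
    (hc : ∀ i, 1 ≤ i → i ≤ d → 0 ≤ c i) (hc' : ∀ i j, 1 ≤ i → i ≤ j → j ≤ d → c j ≤ c i)
    (hsum : ∑ i ∈ Icc 1 d, c i * p i = 1) : DescProb d (fun i => c i * p i) where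
  nonneg i hi hid := mul_nonneg (hc i hi hid) (hp.nonneg i hi hid)
  anti i j hi hij hjd := mul_le_mul (hc' i j hi hij hjd) (hp.anti i j hi hij hjd)
    (hp.nonneg j (by omega) hjd) (hc i hi (by omega))
  sum_one := hsum

end TailSums

section Meet

variable {d : ℕ} {p q : ℕ → ℝ}

theorem sum_Icc_meet2 (p q : ℕ → ℝ) (k : ℕ) :
    ∑ i ∈ Icc 1 k, meet2 p q i = min (∑ i ∈ Icc 1 k, p i) (∑ i ∈ Icc 1 k, q i) := by
  induction k with
  | zero => simp
  | succ k ih =>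
    rw [sum_Icc_succ_top (by omega), ih, meet2, Nat.add_sub_cancel, add_sub_cancel]

theorem Cm_meet2 (hpq : ∑ i ∈ Icc 1 d, p i = ∑ i ∈ Icc 1 d, q i) {l : ℕ} (hl : 1 ≤ l)
    (hld : l ≤ d + 1) : Cm d (meet2 p q) l = max (Cm d p l) (Cm d q l) := by
  obtain ⟨k, rfl⟩ : ∃ k, l = k + 1 := ⟨l - 1, by omega⟩
  have hm := sum_Icc_one_add_Cm (meet2 p q) (by omega : k ≤ d)
  have hp := sum_Icc_one_add_Cm p (by omega : k ≤ d)
  have hq := sum_Icc_one_add_Cm q (by omega : k ≤ d)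
  rw [sum_Icc_meet2, sum_Icc_meet2, ← hpq, min_self] at hm
  rw [← eq_sub_iff_add_eq'] at hm hp hq
  rw [hm, hp, hq, ← hpq, max_sub_sub_left]

theorem meet2_succ (p q : ℕ → ℝ) (k : ℕ) :
    meet2 p q (k + 1) = min (∑ i ∈ Icc 1 k, p i + p (k + 1)) (∑ i ∈ Icc 1 k, q i + q (k + 1)) -
      min (∑ i ∈ Icc 1 k, p i) (∑ i ∈ Icc 1 k, q i) := by
  rw [meet2, sum_Icc_succ_top (by omega), sum_Icc_succ_top (by omega), Nat.add_sub_cancel]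

/-- Prefix sums of `p ∧ q` are the minimum of two concave sequences, hence concave. -/
theorem meet2_add_two_le {k : ℕ} (hp : p (k + 2) ≤ p (k + 1)) (hq : q (k + 2) ≤ q (k + 1)) :
    meet2 p q (k + 2) ≤ meet2 p q (k + 1) := by
  rw [meet2_succ, meet2_succ, sum_Icc_succ_top (by omega), sum_Icc_succ_top (by omega)]
  set A := ∑ i ∈ Icc 1 k, p i
  set B := ∑ i ∈ Icc 1 k, q i
  have h₁ := min_le_left (A + p (k + 1) + p (k + 2)) (B + q (k + 1) + q (k + 2))
  have h₂ := min_le_right (A + p (k + 1) + p (k + 2)) (B + q (k + 1) + q (k + 2))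
  have h₃ := min_le_left A B
  have h₄ := min_le_right A B
  rcases min_cases (A + p (k + 1)) (B + q (k + 1)) with ⟨h, -⟩ | ⟨h, -⟩ <;> linarith

theorem DescProb.meet2 (hp : DescProb d p) (hq : DescProb d q) : DescProb d (meet2 p q) where
  nonneg i hi hid := by
    obtain ⟨k, rfl⟩ : ∃ k, i = k + 1 := ⟨i - 1, by omega⟩
    rw [meet2_succ, sub_nonneg]
    exact min_le_min (le_add_of_nonneg_right (hp.nonneg _ hi hid))
      (le_add_of_nonneg_right (hq.nonneg _ hi hid))
  anti i j hi hij hjd := by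
    induction j, hij using Nat.le_induction with
    | base => exact le_rfl
    | succ j hij ih =>
      obtain ⟨k, rfl⟩ : ∃ k, j = k + 1 := ⟨j - 1, by omega⟩
      exact (meet2_add_two_le (hp.anti _ _ (by omega) (by omega) hjd)
        (hq.anti _ _ (by omega) (by omega) hjd)).trans (ih (by omega))
  sum_one := by rw [sum_Icc_meet2, hp.sum_one, hq.sum_one, min_self]

end Meet

section Recursion

variable {d : ℕ} {ψ φ : ℕ → ℝ}

theorem finite_setOf_ratio (prev : ℕ) :
    {x : ℝ | ∃ l, 1 ≤ l ∧ l ≤ prev - 1 ∧ x = ratio d ψ φ prev l}.Finite := by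
  refine ((Set.finite_Icc 1 (prev - 1)).image (ratio d ψ φ prev)).subset ?_
  rintro x ⟨l, hl, hlp, rfl⟩
  exact ⟨l, ⟨hl, hlp⟩, rfl⟩

theorem stepQ_le_ratio {prev l : ℕ} (hl : 1 ≤ l) (hlp : l ≤ prev - 1) :
    stepQ d ψ φ prev ≤ ratio d ψ φ prev l :=
  csInf_le (finite_setOf_ratio prev).bddBelow ⟨l, hl, hlp, rfl⟩

theorem stepL_spec {prev : ℕ} (hprev : 2 ≤ prev) :
    1 ≤ stepL d ψ φ prev ∧ stepL d ψ φ prev ≤ prev - 1 ∧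
      ratio d ψ φ prev (stepL d ψ φ prev) = stepQ d ψ φ prev := by
  obtain ⟨l, hl, hlp, hmin⟩ :
      stepQ d ψ φ prev ∈ {x : ℝ | ∃ l, 1 ≤ l ∧ l ≤ prev - 1 ∧ x = ratio d ψ φ prev l} :=
    Set.Nonempty.csInf_mem ⟨_, 1, le_rfl, by omega, rfl⟩ (finite_setOf_ratio prev)
  exact Nat.sInf_mem (s := {l | 1 ≤ l ∧ l ≤ prev - 1 ∧ ratio d ψ φ prev l = stepQ d ψ φ prev})
    ⟨l, hl, hlp, hmin.symm⟩

theorem Lseq_succ_lt {j : ℕ} (hj : 2 ≤ Lseq d ψ φ j) :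
    1 ≤ Lseq d ψ φ (j + 1) ∧ Lseq d ψ φ (j + 1) < Lseq d ψ φ j := by
  obtain ⟨h₁, h₂, -⟩ := stepL_spec (d := d) (ψ := ψ) (φ := φ) hj
  exact ⟨h₁, by rw [Lseq]; omega⟩

theorem exists_Lseq_eq_one : ∃ j, Lseq d ψ φ j = 1 := by
  by_contra! hne
  have key : ∀ j, 1 ≤ Lseq d ψ φ j ∧ Lseq d ψ φ j + j ≤ d + 1 := by
    intro j
    induction j with
    | zero => simp [Lseq]
    | succ j ih =>
      have := Lseq_succ_lt (d := d) (ψ := ψ) (φ := φ) (j := j) (by have := hne j; omega)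
      omega
  have := key (d + 1)
  omega

theorem Lseq_kstop : Lseq d ψ φ (kstop d ψ φ) = 1 := Nat.sInf_mem exists_Lseq_eq_one

theorem Lseq_ne_one {j : ℕ} (hj : j < kstop d ψ φ) : Lseq d ψ φ j ≠ 1 :=
  Nat.notMem_of_lt_sInf (s := {j | Lseq d ψ φ j = 1}) hj

theorem two_le_Lseq {j : ℕ} (hj : j < kstop d ψ φ) : 2 ≤ Lseq d ψ φ j := by
  induction j with
  | zero => have := Lseq_ne_one hj; simp only [Lseq] at this ⊢; omega
  | succ j ih =>
    have := (Lseq_succ_lt (ih (by omega))).1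
    have := Lseq_ne_one hj
    omega

theorem strictAntiOn_Lseq : StrictAntiOn (Lseq d ψ φ) (Set.Iic (kstop d ψ φ)) :=
  strictAntiOn_of_succ_lt Set.ordConnected_Iic fun j _ _ hj => by
    rw [Order.succ_eq_add_one] at hj ⊢
    exact (Lseq_succ_lt (two_le_Lseq (Set.mem_Iic.mp hj))).2

theorem one_le_Lseq {j : ℕ} (hj : j ≤ kstop d ψ φ) : 1 ≤ Lseq d ψ φ j :=
  Lseq_kstop (d := d) (ψ := ψ) (φ := φ) ▸
    strictAntiOn_Lseq.antitoneOn hj (Set.mem_Iic.mpr le_rfl) hj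

theorem Lseq_le {j : ℕ} (hj : j ≤ kstop d ψ φ) : Lseq d ψ φ j ≤ d + 1 :=
  strictAntiOn_Lseq.antitoneOn (Set.mem_Iic.mpr (Nat.zero_le _)) hj (Nat.zero_le j)

theorem kstop_pos (hd : d ≠ 0) : 0 < kstop d ψ φ := by
  refine Nat.pos_of_ne_zero fun h => ?_
  have := h ▸ Lseq_kstop (d := d) (ψ := ψ) (φ := φ)
  simp only [Lseq] at this
  omega

end Recursion

section Ratios

variable {d : ℕ} {ψ φ : ℕ → ℝ}

theorem Qseq_succ_mul_le (hφ : ∀ i, 1 ≤ i → i ≤ d → 0 < φ i) {j l : ℕ} (hj : j < kstop d ψ φ)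
    (hl : 1 ≤ l) (hlj : l < Lseq d ψ φ j) :
    Qseq d ψ φ (j + 1) * (Cm d φ l - Cm d φ (Lseq d ψ φ j)) ≤
      Cm d ψ l - Cm d ψ (Lseq d ψ φ j) :=
  (le_div_iff₀ (Cm_sub_Cm_pos hφ hl hlj (Lseq_le hj.le))).mp (stepQ_le_ratio hl (by omega))

theorem Qseq_succ_mul (hφ : ∀ i, 1 ≤ i → i ≤ d → 0 < φ i) {j : ℕ} (hj : j < kstop d ψ φ) :
    Cm d ψ (Lseq d ψ φ (j + 1)) - Cm d ψ (Lseq d ψ φ j) =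
      Qseq d ψ φ (j + 1) * (Cm d φ (Lseq d ψ φ (j + 1)) - Cm d φ (Lseq d ψ φ j)) := by
  have hlt := Lseq_succ_lt (two_le_Lseq hj)
  have hpos := Cm_sub_Cm_pos hφ hlt.1 hlt.2 (Lseq_le hj.le)
  rw [Qseq, ← (stepL_spec (two_le_Lseq hj)).2.2, ratio]
  exact (div_mul_cancel₀ _ hpos.ne').symm

theorem Qseq_pos (hψ : ∀ i, 1 ≤ i → i ≤ d → 0 < ψ i) (hφ : ∀ i, 1 ≤ i → i ≤ d → 0 < φ i)
    {j : ℕ} (hj : j < kstop d ψ φ) : 0 < Qseq d ψ φ (j + 1) := by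
  have hlt := Lseq_succ_lt (two_le_Lseq hj)
  have hψ' := Cm_sub_Cm_pos hψ hlt.1 hlt.2 (Lseq_le hj.le)
  have hφ' := Cm_sub_Cm_pos hφ hlt.1 hlt.2 (Lseq_le hj.le)
  rw [Qseq_succ_mul hφ hj] at hψ'
  exact pos_of_mul_pos_left hψ' hφ'.le

theorem Qseq_succ_le_succ (hφ : ∀ i, 1 ≤ i → i ≤ d → 0 < φ i) {j : ℕ}
    (hj : j + 1 < kstop d ψ φ) : Qseq d ψ φ (j + 1) ≤ Qseq d ψ φ (j + 2) := by
  have hlt := Lseq_succ_lt (two_le_Lseq hj)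
  have hlt' := Lseq_succ_lt (two_le_Lseq (by omega : j < kstop d ψ φ))
  have hle := Qseq_succ_mul_le hφ (by omega) hlt.1 (hlt.2.trans hlt'.2)
  have h₁ := Qseq_succ_mul hφ (by omega : j < kstop d ψ φ)
  have h₂ := Qseq_succ_mul hφ hj
  have hpos := Cm_sub_Cm_pos hφ hlt.1 hlt.2 (Lseq_le hj.le)
  refine le_of_mul_le_mul_right ?_ hpos
  linarith

theorem monotoneOn_Qseq (hφ : ∀ i, 1 ≤ i → i ≤ d → 0 < φ i) :
    MonotoneOn (Qseq d ψ φ) (Set.Icc 1 (kstop d ψ φ)) :=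
  monotoneOn_of_le_succ Set.ordConnected_Icc fun j _ hj hj' => by
    obtain ⟨i, rfl⟩ : ∃ i, j = i + 1 := ⟨j - 1, by have := hj.1; omega⟩
    rw [Order.succ_eq_add_one] at hj' ⊢
    exact Qseq_succ_le_succ hφ (by have := hj'.2; omega)

/-- While `q_{j+1} ≤ 1` the increments of the tails of `ψ` are dominated by those of `φ`; once
`q_{j+1} > 1`, the minimality of `q_{j+2}` at `l = 1` compares the heads instead. -/
theorem Cm_Lseq_le (hφ : ∀ i, 1 ≤ i → i ≤ d → 0 < φ i)
    (hsum : ∑ i ∈ Icc 1 d, ψ i = ∑ i ∈ Icc 1 d, φ i) {j : ℕ} (hj : j ≤ kstop d ψ φ) :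
    Cm d ψ (Lseq d ψ φ j) ≤ Cm d φ (Lseq d ψ φ j) := by
  induction j with
  | zero => simp only [Lseq, Cm_of_lt _ (Nat.lt_succ_self d), le_refl]
  | succ j ih =>
    have hj' : j < kstop d ψ φ := by omega
    have hlt := Lseq_succ_lt (two_le_Lseq hj')
    have hpos := Cm_sub_Cm_pos hφ hlt.1 hlt.2 (Lseq_le hj'.le)
    have hstep := Qseq_succ_mul hφ hj'
    by_cases hq : Qseq d ψ φ (j + 1) ≤ 1
    · nlinarith [ih hj'.le, mul_le_mul_of_nonneg_right hq hpos.le]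
    rcases hj.eq_or_lt with hk | hk
    · rw [hk, Lseq_kstop]
      exact hsum.le
    have hq' : 1 ≤ Qseq d ψ φ (j + 2) :=
      (not_le.mp hq).le.trans (Qseq_succ_le_succ hφ hk)
    have hlt' := Lseq_succ_lt (two_le_Lseq hk)
    have hle := Qseq_succ_mul_le hφ hk le_rfl (by omega)
    have hpos' := Cm_sub_Cm_pos hφ le_rfl (by omega) (Lseq_le hk.le)
    change Cm d ψ 1 = Cm d φ 1 at hsum
    nlinarith [mul_le_mul_of_nonneg_right hq' hpos'.le]

theorem Qseq_one_lt_one (hφ : ∀ i, 1 ≤ i → i ≤ d → 0 < φ i)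
    (hsum : ∑ i ∈ Icc 1 d, ψ i = ∑ i ∈ Icc 1 d, φ i) (hnm : ¬ MajorizedBy d ψ φ) :
    Qseq d ψ φ 1 < 1 := by
  obtain ⟨k, hk, hkd, hlt⟩ : ∃ k, 1 ≤ k ∧ k ≤ d ∧ ∑ i ∈ Icc 1 k, φ i < ∑ i ∈ Icc 1 k, ψ i := by
    by_contra! h
    exact hnm ⟨h, hsum⟩
  have hkd' : k < d := hkd.lt_of_ne (by rintro rfl; exact hlt.ne' hsum)
  have hψk := sum_Icc_one_add_Cm ψ hkd'.le
  have hφk := sum_Icc_one_add_Cm φ hkd'.le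
  have hle := Qseq_succ_mul_le (ψ := ψ) hφ (j := 0) (kstop_pos (by omega)) (by omega)
    (by simp only [Lseq]; omega : k + 1 < Lseq d ψ φ 0)
  have hpos := Cm_sub_Cm_pos hφ (by omega) (by omega : k + 1 < d + 1) le_rfl
  simp only [Lseq, Cm_of_lt _ (Nat.lt_succ_self d), sub_zero] at hle hpos
  nlinarith

end Ratios

section Blocks

variable {d : ℕ} {ψ φ : ℕ → ℝ}

noncomputable def blockIdx (d : ℕ) (ψ φ : ℕ → ℝ) (i : ℕ) : ℕ := sInf {j : ℕ | Lseq d ψ φ j ≤ i}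

theorem Lseq_blockIdx_le {i : ℕ} (hi : 1 ≤ i) : Lseq d ψ φ (blockIdx d ψ φ i) ≤ i :=
  Nat.sInf_mem (s := {j | Lseq d ψ φ j ≤ i}) ⟨kstop d ψ φ, Lseq_kstop.trans_le hi⟩

theorem blockIdx_le_kstop {i : ℕ} (hi : 1 ≤ i) : blockIdx d ψ φ i ≤ kstop d ψ φ :=
  Nat.sInf_le (Lseq_kstop.trans_le hi)

theorem blockIdx_antitone {i i' : ℕ} (hi : 1 ≤ i) (hii' : i ≤ i') :
    blockIdx d ψ φ i' ≤ blockIdx d ψ φ i :=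
  Nat.sInf_le ((Lseq_blockIdx_le hi).trans hii')

theorem blockIdx_spec {i : ℕ} (hi : 1 ≤ i) (hid : i ≤ d) :
    1 ≤ blockIdx d ψ φ i ∧ i < Lseq d ψ φ (blockIdx d ψ φ i - 1) := by
  have hpos : 1 ≤ blockIdx d ψ φ i := by
    by_contra! h
    have := Lseq_blockIdx_le (d := d) (ψ := ψ) (φ := φ) hi
    rw [Nat.lt_one_iff.mp h, Lseq] at this
    omega
  have hlt : blockIdx d ψ φ i - 1 < sInf {j | Lseq d ψ φ j ≤ i} := Nat.sub_one_lt (by omega)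
  exact ⟨hpos, not_le.mp (Nat.notMem_of_lt_sInf (s := {j | Lseq d ψ φ j ≤ i}) hlt)⟩

theorem blockIdx_eq {i j : ℕ} (hj : 1 ≤ j) (hjk : j ≤ kstop d ψ φ) (hji : Lseq d ψ φ j ≤ i)
    (hij : i < Lseq d ψ φ (j - 1)) : blockIdx d ψ φ i = j := by
  have hi : 1 ≤ i := (one_le_Lseq hjk).trans hji
  refine le_antisymm (Nat.sInf_le hji) ?_
  by_contra! h
  have := strictAntiOn_Lseq.antitoneOn (Set.mem_Iic.mpr (blockIdx_le_kstop hi))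
    (Set.mem_Iic.mpr (by omega : j - 1 ≤ kstop d ψ φ)) (by omega : blockIdx d ψ φ i ≤ j - 1)
  have := Lseq_blockIdx_le (d := d) (ψ := ψ) (φ := φ) hi
  omega

theorem blockIdx_succ_eq_or {i : ℕ} (hi : 1 ≤ i) (hid : i + 1 ≤ d) :
    blockIdx d ψ φ i = blockIdx d ψ φ (i + 1) ∨ ∃ j ≤ kstop d ψ φ, Lseq d ψ φ j = i + 1 := by
  obtain ⟨h₁, h₂⟩ := blockIdx_spec (d := d) (ψ := ψ) (φ := φ) (by omega : 1 ≤ i + 1) hid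
  have h₃ := Lseq_blockIdx_le (d := d) (ψ := ψ) (φ := φ) (by omega : 1 ≤ i + 1)
  rcases h₃.lt_or_eq with h | h
  · exact .inl (blockIdx_eq h₁ (blockIdx_le_kstop (by omega)) (by omega) (by omega))
  · exact .inr ⟨_, blockIdx_le_kstop (by omega), h⟩

theorem Cm_Qseq_blockIdx_mul (hφ : ∀ i, 1 ≤ i → i ≤ d → 0 < φ i) {j : ℕ}
    (hj : j ≤ kstop d ψ φ) :
    Cm d (fun i => Qseq d ψ φ (blockIdx d ψ φ i) * φ i) (Lseq d ψ φ j) =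
      Cm d ψ (Lseq d ψ φ j) := by
  induction j with
  | zero => simp only [Lseq, Cm_of_lt _ (Nat.lt_succ_self d)]
  | succ j ih =>
    have hj' : j < kstop d ψ φ := by omega
    have hlt := Lseq_succ_lt (two_le_Lseq hj')
    rw [Cm_mul_of_eqOn_Ico (a := Qseq d ψ φ (j + 1)) φ (fun i hi => ?_) hlt.2.le
      (Lseq_le hj'.le), ih hj'.le, ← Qseq_succ_mul hφ hj', sub_add_cancel]
    rw [mem_Ico] at hi
    rw [blockIdx_eq (by omega) hj hi.1 hi.2]

end Blocks

section Residual

variable {d : ℕ} {ψ φ : ℕ → ℝ}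

noncomputable def residualCoeff (d : ℕ) (ψ φ : ℕ → ℝ) (i : ℕ) : ℝ :=
  nvec d ψ φ i * Qseq d ψ φ (blockIdx d ψ φ i)

theorem nvec_mul_phif : (fun i => nvec d ψ φ i * phif d ψ φ i) =
    fun i => residualCoeff d ψ φ i * φ i :=
  funext fun _ => (mul_assoc _ _ _).symm

theorem nvec_mul_phit : (fun i => nvec d ψ φ i * phit d ψ φ i) =
    fun i => residualCoeff d ψ φ i * meet2 ψ φ i :=
  funext fun _ => (mul_assoc _ _ _).symm

theorem Qseq_one_le_Qseq_blockIdx (hφ : ∀ i, 1 ≤ i → i ≤ d → 0 < φ i) {i : ℕ} (hi : 1 ≤ i)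
    (hid : i ≤ d) : Qseq d ψ φ 1 ≤ Qseq d ψ φ (blockIdx d ψ φ i) := by
  have hJ := (blockIdx_spec (ψ := ψ) (φ := φ) hi hid).1
  exact monotoneOn_Qseq hφ ⟨le_rfl, hJ.trans (blockIdx_le_kstop hi)⟩
    ⟨hJ, blockIdx_le_kstop hi⟩ hJ

theorem Qseq_blockIdx_anti (hφ : ∀ i, 1 ≤ i → i ≤ d → 0 < φ i) {i i' : ℕ} (hi : 1 ≤ i)
    (hii' : i ≤ i') (hi' : i' ≤ d) :
    Qseq d ψ φ (blockIdx d ψ φ i') ≤ Qseq d ψ φ (blockIdx d ψ φ i) := by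
  have hJ' := (blockIdx_spec (ψ := ψ) (φ := φ) (by omega) hi').1
  exact monotoneOn_Qseq hφ ⟨hJ', (blockIdx_antitone hi hii').trans (blockIdx_le_kstop hi)⟩
    ⟨hJ'.trans (blockIdx_antitone hi hii'), blockIdx_le_kstop hi⟩ (blockIdx_antitone hi hii')

theorem residualCoeff_eq (hψ : ∀ i, 1 ≤ i → i ≤ d → 0 < ψ i)
    (hφ : ∀ i, 1 ≤ i → i ≤ d → 0 < φ i) {i : ℕ} (hi : 1 ≤ i) (hid : i ≤ d) :
    residualCoeff d ψ φ i =
      (Qseq d ψ φ (blockIdx d ψ φ i) - Qseq d ψ φ 1) / (1 - Qseq d ψ φ 1) := by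
  obtain ⟨j, hj⟩ : ∃ j, blockIdx d ψ φ i = j + 1 :=
    ⟨blockIdx d ψ φ i - 1, by have := (blockIdx_spec (ψ := ψ) (φ := φ) hi hid).1; omega⟩
  have hjk : j < kstop d ψ φ := by
    have := blockIdx_le_kstop (d := d) (ψ := ψ) (φ := φ) hi
    omega
  have hpos := hj ▸ Qseq_pos hψ hφ hjk
  rw [residualCoeff, nvec]
  change (1 - _ / Qseq d ψ φ (blockIdx d ψ φ i)) / _ * _ = _
  field_simp

theorem residualCoeff_nonneg (hψ : ∀ i, 1 ≤ i → i ≤ d → 0 < ψ i)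
    (hφ : ∀ i, 1 ≤ i → i ≤ d → 0 < φ i) (hq : Qseq d ψ φ 1 < 1) (i : ℕ) (hi : 1 ≤ i)
    (hid : i ≤ d) : 0 ≤ residualCoeff d ψ φ i := by
  rw [residualCoeff_eq hψ hφ hi hid]
  exact div_nonneg (sub_nonneg.mpr (Qseq_one_le_Qseq_blockIdx hφ hi hid))
    (sub_nonneg.mpr hq.le)

theorem residualCoeff_anti (hψ : ∀ i, 1 ≤ i → i ≤ d → 0 < ψ i)
    (hφ : ∀ i, 1 ≤ i → i ≤ d → 0 < φ i) (hq : Qseq d ψ φ 1 < 1) (i i' : ℕ) (hi : 1 ≤ i)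
    (hii' : i ≤ i') (hi' : i' ≤ d) :
    residualCoeff d ψ φ i' ≤ residualCoeff d ψ φ i := by
  rw [residualCoeff_eq hψ hφ hi (by omega), residualCoeff_eq hψ hφ (by omega) hi']
  exact div_le_div_of_nonneg_right
    (sub_le_sub_right (Qseq_blockIdx_anti hφ hi hii' hi') _) (sub_nonneg.mpr hq.le)

theorem sum_residualCoeff_mul (hψ : DescProb d ψ) (hφ : DescProb d φ)
    (hψpos : ∀ i, 1 ≤ i → i ≤ d → 0 < ψ i) (hφpos : ∀ i, 1 ≤ i → i ≤ d → 0 < φ i)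
    (hq : Qseq d ψ φ 1 < 1) : ∑ i ∈ Icc 1 d, residualCoeff d ψ φ i * φ i = 1 := by
  have hsum : ∑ i ∈ Icc 1 d, Qseq d ψ φ (blockIdx d ψ φ i) * φ i = 1 := by
    have := Cm_Qseq_blockIdx_mul (ψ := ψ) hφpos le_rfl
    rw [Lseq_kstop] at this
    exact this.trans hψ.sum_one
  calc ∑ i ∈ Icc 1 d, residualCoeff d ψ φ i * φ i
      = ∑ i ∈ Icc 1 d, (Qseq d ψ φ (blockIdx d ψ φ i) * φ i - Qseq d ψ φ 1 * φ i) /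
          (1 - Qseq d ψ φ 1) := sum_congr rfl fun i hi => by
        rw [mem_Icc] at hi
        rw [residualCoeff_eq hψpos hφpos hi.1 hi.2]
        ring
    _ = 1 := by
      rw [← sum_div, sum_sub_distrib, ← mul_sum, hsum, hφ.sum_one, mul_one,
        div_self (sub_ne_zero.mpr hq.ne')]

/-- Away from the block boundaries `residualCoeff` is constant, and at a boundary `l_j` the tails
of `ψ ∧ φ` and `φ` agree, since `C_{l_j}(ψ) ≤ C_{l_j}(φ)`. -/
theorem Cm_residualCoeff_mul_meet2 (hφ : ∀ i, 1 ≤ i → i ≤ d → 0 < φ i)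
    (hsum : ∑ i ∈ Icc 1 d, ψ i = ∑ i ∈ Icc 1 d, φ i) {l : ℕ} (hl : 1 ≤ l) :
    Cm d (fun i => residualCoeff d ψ φ i * meet2 ψ φ i) l =
      Cm d (fun i => residualCoeff d ψ φ i * φ i) l +
        residualCoeff d ψ φ l * (Cm d (meet2 ψ φ) l - Cm d φ l) := by
  suffices key : Cm d (fun i => residualCoeff d ψ φ i * (meet2 ψ φ i - φ i)) l =
      residualCoeff d ψ φ l * Cm d (fun i => meet2 ψ φ i - φ i) l by
    simp only [mul_sub, Cm_sub] at key
    linarith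
  refine Cm_mul_eq_mul_Cm fun i hli => ?_
  rcases lt_or_ge i d with hid | hid
  · rcases blockIdx_succ_eq_or (ψ := ψ) (φ := φ) (by omega) hid with h | ⟨j, hj, hji⟩
    · left
      simp only [residualCoeff, nvec, blockIdx] at h ⊢
      rw [h]
    · right
      rw [Cm_sub, ← hji, Cm_meet2 hsum (one_le_Lseq hj) (Lseq_le hj),
        max_eq_right (Cm_Lseq_le hφ hsum hj), sub_self]
  · exact .inr (Cm_of_lt _ (by omega))

end Residual

theorem thrifty_residual_majorized_general (d : ℕ) (ψ φ : ℕ → ℝ)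
    (hψ : DescProb d ψ) (hφ : DescProb d φ)
    (hψpos : ∀ i, 1 ≤ i → i ≤ d → 0 < ψ i) (hφpos : ∀ i, 1 ≤ i → i ≤ d → 0 < φ i)
    (hnm : ¬ MajorizedBy d ψ φ) :
    DescProb d (fun i => nvec d ψ φ i * phif d ψ φ i) ∧
      DescProb d (fun i => nvec d ψ φ i * phit d ψ φ i) ∧
      MajorizedBy d (fun i => nvec d ψ φ i * phit d ψ φ i)
        (fun i => nvec d ψ φ i * phif d ψ φ i) := by
  have hsum : ∑ i ∈ Icc 1 d, ψ i = ∑ i ∈ Icc 1 d, φ i := hψ.sum_one.trans hφ.sum_one.symm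
  have hq := Qseq_one_lt_one hφpos hsum hnm
  have hc := residualCoeff_nonneg hψpos hφpos hq
  have hc' := residualCoeff_anti hψpos hφpos hq
  have htail (l : ℕ) (hl : 1 ≤ l) := Cm_residualCoeff_mul_meet2 hφpos hsum hl
  have hμ := sum_residualCoeff_mul hψ hφ hψpos hφpos hq
  have hν : ∑ i ∈ Icc 1 d, residualCoeff d ψ φ i * meet2 ψ φ i = 1 := by
    have hm : Cm d (meet2 ψ φ) 1 = Cm d φ 1 := (hψ.meet2 hφ).sum_one.trans hφ.sum_one.symm
    have := htail 1 le_rfl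
    rw [hm, sub_self, mul_zero, add_zero] at this
    exact this.trans hμ
  rw [nvec_mul_phif, nvec_mul_phit]
  refine ⟨hφ.mul hc hc' hμ, (hψ.meet2 hφ).mul hc hc' hν,
    majorizedBy_of_Cm_le (hν.trans hμ.symm) fun l hl hld => ?_⟩
  rw [htail l (by omega), Cm_meet2 hsum (by omega) (by omega)]
  exact le_add_of_nonneg_right
    (mul_nonneg (hc l (by omega) hld) (sub_nonneg.mpr (le_max_right _ _)))

/-- Upon failure of the probabilistic transformation, the residual
vectors `μ_i = n_i φ^f_i` (greedy) and `ν_i = n_i φ^t_i` (thrifty) are descending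
probability vectors and `ν ≺ μ`: the thrifty residual is more coherent. -/
theorem thrifty_residual_majorized (d : ℕ) (hd : 1 ≤ d) (ψ φ : ℕ → ℝ)
    (hψ : DescProb d ψ) (hφ : DescProb d φ)
    (hψpos : ∀ i, 1 ≤ i → i ≤ d → 0 < ψ i) (hφpos : ∀ i, 1 ≤ i → i ≤ d → 0 < φ i)
    (hnm : ¬ MajorizedBy d ψ φ) :
    DescProb d (fun i => nvec d ψ φ i * phif d ψ φ i) ∧
      DescProb d (fun i => nvec d ψ φ i * phit d ψ φ i) ∧
      MajorizedBy d (fun i => nvec d ψ φ i * phit d ψ φ i)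
        (fun i => nvec d ψ φ i * phif d ψ φ i) :=
  thrifty_residual_majorized_general d ψ φ hψ hφ hψpos hφpos hnm
end

section
/- Let ψ, φ^1, …, φ^m ∈ ℝ^d be descending probability vectors with all entries strictly positive, let φ^∧_e = ψ ∧ φ^1 ∧ ⋯ ∧ φ^m be their meet, and define q_I(x) = min_{l ∈ {1,…,d}} C_l(ψ)/C_l(x). If there exist ι ∈ {1,…,m} and l ∈ {1,…,d} with C_l(ψ) ≤ C_l(φ^ι), then the bound is saturated by the least individual probability: q_I(φ^∧_e) = min_{ι ∈ {1,…,m}} q_I(φ^ι). -/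
open Finset

/-- The meet `ψ ∧ φ^1 ∧ ⋯ ∧ φ^m` of `ψ` and a family `φ` of descending probability
vectors in the majorization lattice, defined componentwise via prefix sums. -/
noncomputable def meetAll (ψ : ℕ → ℝ) (m : ℕ) (φ : Fin m → ℕ → ℝ) (i : ℕ) : ℝ :=
  min (∑ j ∈ Finset.Icc 1 i, ψ j) (⨅ ι, ∑ j ∈ Finset.Icc 1 i, φ ι j) -
    min (∑ j ∈ Finset.Icc 1 (i - 1), ψ j) (⨅ ι, ∑ j ∈ Finset.Icc 1 (i - 1), φ ι j)

/-- The maximal probability `q_I(x) = min_{l ∈ {1,…,d}} C_l(ψ) / C_l(x)` of transforming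
the initial vector `ψ` into the target vector `x`. -/
noncomputable def qI (d : ℕ) (ψ x : ℕ → ℝ) : ℝ :=
  sInf {r : ℝ | ∃ l, 1 ≤ l ∧ l ≤ d ∧ r = Cm d ψ l / Cm d x l}

/-! The tail sums of the meet are the pointwise maxima of the tail sums of `ψ, φ^1, …, φ^m`,
since its prefix sums are the pointwise minima. As `q_I` is antitone in the tails of the target,
`q_I(φ^∧_e) ≤ q_I(φ^ι)` for every `ι`. Conversely, at each `l` the tail of the meet is that of
some `φ^ι`, so the ratio is at least `q_I(φ^ι)`, or that of `ψ`, so the ratio is `1`, which is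
at least `q_I(φ^ι)` for the `ι` provided by the hypothesis. -/

lemma sum_Icc_sub_pred {M : Type*} [AddCommGroup M] (f : ℕ → M) (k : ℕ) :
    ∑ i ∈ Icc 1 k, (f i - f (i - 1)) = f k - f 0 := by
  induction k with
  | zero => simp
  | succ k ih => rw [sum_Icc_succ_top (by omega), ih, Nat.add_sub_cancel, sub_add_sub_cancel']

lemma Cm_pos {d : ℕ} {p : ℕ → ℝ} (hp : ∀ i, 1 ≤ i → i ≤ d → 0 < p i) {l : ℕ}
    (hl : 1 ≤ l) (hld : l ≤ d) : 0 < Cm d p l :=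
  sum_pos (fun i hi => hp i (hl.trans (mem_Icc.1 hi).1) (mem_Icc.1 hi).2)
    ⟨d, mem_Icc.2 ⟨hld, le_rfl⟩⟩

lemma Cm_eq_sum_sub_sum (d : ℕ) (p : ℕ → ℝ) {l : ℕ} (hl : 1 ≤ l) (hld : l ≤ d + 1) :
    Cm d p l = ∑ i ∈ Icc 1 d, p i - ∑ i ∈ Icc 1 (l - 1), p i := by
  obtain ⟨k, rfl⟩ : ∃ k, l = k + 1 := ⟨l - 1, by omega⟩
  have hIoc : ∀ a b : ℕ, Icc (a + 1) b = Ioc a b := Icc_add_one_left_eq_Ioc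
  rw [Cm, Nat.add_sub_cancel, hIoc, hIoc 0, hIoc 0, eq_sub_iff_add_eq, add_comm,
    sum_Ioc_consecutive _ k.zero_le (by omega)]

lemma Cm_eq_one_sub {d : ℕ} {p : ℕ → ℝ} (hp : ∑ i ∈ Icc 1 d, p i = 1) {l : ℕ} (hl : 1 ≤ l)
    (hld : l ≤ d + 1) : Cm d p l = 1 - ∑ i ∈ Icc 1 (l - 1), p i := by
  rw [Cm_eq_sum_sub_sum d p hl hld, hp]

section Meet

variable {d m : ℕ} {ψ : ℕ → ℝ} {φ : Fin m → ℕ → ℝ}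

lemma sum_Icc_meetAll (ψ : ℕ → ℝ) (φ : Fin m → ℕ → ℝ) (k : ℕ) :
    ∑ i ∈ Icc 1 k, meetAll ψ m φ i =
      min (∑ j ∈ Icc 1 k, ψ j) (⨅ ι, ∑ j ∈ Icc 1 k, φ ι j) := by
  refine (sum_Icc_sub_pred
    (fun k => min (∑ j ∈ Icc 1 k, ψ j) (⨅ ι, ∑ j ∈ Icc 1 k, φ ι j)) k).trans ?_
  simp

variable [Nonempty (Fin m)] (hψ : ∑ i ∈ Icc 1 d, ψ i = 1) (hφ : ∀ ι, ∑ i ∈ Icc 1 d, φ ι i = 1)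
include hψ hφ

lemma Cm_meetAll {l : ℕ} (hl : 1 ≤ l) (hld : l ≤ d + 1) :
    Cm d (meetAll ψ m φ) l =
      1 - min (∑ j ∈ Icc 1 (l - 1), ψ j) (⨅ ι, ∑ j ∈ Icc 1 (l - 1), φ ι j) := by
  have htotal : ∑ i ∈ Icc 1 d, meetAll ψ m φ i = 1 := by simp [sum_Icc_meetAll, hψ, hφ]
  rw [Cm_eq_one_sub htotal hl hld, sum_Icc_meetAll]

lemma Cm_le_Cm_meetAll (ι : Fin m) {l : ℕ} (hl : 1 ≤ l) (hld : l ≤ d + 1) :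
    Cm d (φ ι) l ≤ Cm d (meetAll ψ m φ) l := by
  rw [Cm_meetAll hψ hφ hl hld, Cm_eq_one_sub (hφ ι) hl hld]
  exact sub_le_sub_left ((min_le_right _ _).trans (ciInf_le (Finite.bddBelow_range _) ι)) 1

lemma Cm_meetAll_eq_or {l : ℕ} (hl : 1 ≤ l) (hld : l ≤ d + 1) :
    Cm d (meetAll ψ m φ) l = Cm d ψ l ∨ ∃ ι, Cm d (meetAll ψ m φ) l = Cm d (φ ι) l := by
  rw [Cm_meetAll hψ hφ hl hld, Cm_eq_one_sub hψ hl hld]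
  obtain ⟨ι, hι⟩ := exists_eq_ciInf_of_finite (f := fun ι => ∑ j ∈ Icc 1 (l - 1), φ ι j)
  rcases min_choice (∑ j ∈ Icc 1 (l - 1), ψ j) (⨅ ι, ∑ j ∈ Icc 1 (l - 1), φ ι j) with h | h
  · exact .inl (by rw [h])
  · exact .inr ⟨ι, by rw [h, ← hι, Cm_eq_one_sub (hφ ι) hl hld]⟩

end Meet

lemma qI_le_div (d : ℕ) (ψ x : ℕ → ℝ) {l : ℕ} (hl : 1 ≤ l) (hld : l ≤ d) :
    qI d ψ x ≤ Cm d ψ l / Cm d x l := by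
  refine csInf_le (((Set.finite_Icc 1 d).image fun l => Cm d ψ l / Cm d x l).subset ?_).bddBelow
    ⟨l, hl, hld, rfl⟩
  rintro _ ⟨l, hl, hld, rfl⟩
  exact ⟨l, ⟨hl, hld⟩, rfl⟩

lemma le_qI {d : ℕ} (hd : 1 ≤ d) {ψ x : ℕ → ℝ} {r : ℝ}
    (h : ∀ l, 1 ≤ l → l ≤ d → r ≤ Cm d ψ l / Cm d x l) : r ≤ qI d ψ x :=
  le_csInf ⟨_, 1, le_rfl, hd, rfl⟩ (by rintro _ ⟨l, hl, hld, rfl⟩; exact h l hl hld)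

lemma qI_le_qI_of_Cm_le {d : ℕ} (hd : 1 ≤ d) {ψ x y : ℕ → ℝ}
    (hψ : ∀ l, 1 ≤ l → l ≤ d → 0 ≤ Cm d ψ l) (hx : ∀ l, 1 ≤ l → l ≤ d → 0 < Cm d x l)
    (hxy : ∀ l, 1 ≤ l → l ≤ d → Cm d x l ≤ Cm d y l) : qI d ψ y ≤ qI d ψ x :=
  le_qI hd fun l hl hld => (qI_le_div d ψ y hl hld).trans
    (div_le_div_of_nonneg_left (hψ l hl hld) (hx l hl hld) (hxy l hl hld))

/-- If some `C_l(ψ) ≤ C_l(φ^ι)`, then the bound is saturated by the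
least individual probability: `q_I(φ^∧_e) = min_ι q_I(φ^ι)`. -/
theorem ocr_probability_eq (d m : ℕ) (hd : 1 ≤ d) (hm : 1 ≤ m)
    (ψ : ℕ → ℝ) (φ : Fin m → ℕ → ℝ)
    (hψ : DescProb d ψ) (hφ : ∀ ι, DescProb d (φ ι))
    (hψpos : ∀ i, 1 ≤ i → i ≤ d → 0 < ψ i)
    (hφpos : ∀ ι i, 1 ≤ i → i ≤ d → 0 < φ ι i)
    (hex : ∃ ι, ∃ l, 1 ≤ l ∧ l ≤ d ∧ Cm d ψ l ≤ Cm d (φ ι) l) :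
    qI d ψ (meetAll ψ m φ) = ⨅ ι, qI d ψ (φ ι) := by
  have : Nonempty (Fin m) := ⟨⟨0, hm⟩⟩
  have hsum := hψ.sum_one
  have hsums := fun ι => (hφ ι).sum_one
  have hbdd : BddBelow (Set.range fun ι => qI d ψ (φ ι)) := Finite.bddBelow_range _
  apply le_antisymm
  · exact le_ciInf fun ι => qI_le_qI_of_Cm_le hd (fun l hl hld => (Cm_pos hψpos hl hld).le)
      (fun l hl hld => Cm_pos (hφpos ι) hl hld)
      fun l hl hld => Cm_le_Cm_meetAll hsum hsums ι hl (by omega)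
  refine le_qI hd fun l hl hld => ?_
  rcases Cm_meetAll_eq_or hsum hsums hl (by omega) with h | ⟨ι, h⟩
  · obtain ⟨ι₀, l₀, hl₀, hl₀d, hψφ⟩ := hex
    rw [h, div_self (Cm_pos hψpos hl hld).ne']
    calc ⨅ ι, qI d ψ (φ ι) ≤ qI d ψ (φ ι₀) := ciInf_le hbdd ι₀
      _ ≤ Cm d ψ l₀ / Cm d (φ ι₀) l₀ := qI_le_div d ψ _ hl₀ hl₀d
      _ ≤ 1 := (div_le_one (Cm_pos (hφpos ι₀) hl₀ hl₀d)).2 hψφ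
  · rw [h]
    exact (ciInf_le hbdd ι).trans (qI_le_div d ψ _ hl hld)
end
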